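/- Let U be an m×s complex matrix with orthonormal columns (s ≤ m−1). Let U_f be the (m−1)×s matrix obtained from U by deleting its first row, and U_l the (m−1)×s matrix obtained by deleting its last row, and assume both U_f and U_l have full column rank s. Define E = U_f − U_l U_l† U_f, where U_l† is the Moore–Penrose pseudo-inverse. Then ‖E‖₂ ≤ ‖P_f − P_l‖₂ = sin θ₁, where P_f and P_l are the orthogonal projections onto the column spaces of U_f and U_l, and θ₁ is the largest principal angle between these column spaces. -/

import Mathlib

open scoped Matrix Matrix.Norms.L2Operator ComplexOrder

/-- The positive semidefinite square root of a positive semidefinite matrix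
(the definition removed from Mathlib, restored with its old meaning). -/
noncomputable def Matrix.PosSemidef.sqrt {n 𝕜 : Type*} [Fintype n] [DecidableEq n] [RCLike 𝕜]
    {A : Matrix n n 𝕜} (hA : A.PosSemidef) : Matrix n n 𝕜 :=
  hA.1.eigenvectorUnitary.1 * Matrix.diagonal ((↑) ∘ (√·) ∘ hA.1.eigenvalues) *
  (star hA.1.eigenvectorUnitary : Matrix n n 𝕜)

/-- Spectral (operator 2-) norm of a complex matrix: the operator norm induced by the
Euclidean norms on the domain and codomain. -/
noncomputable def specNorm {m n : Type*} [Fintype m] [Fintype n] [DecidableEq n]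
    (A : Matrix m n ℂ) : ℝ := ‖A‖

/-- The singular values (unordered, indexed by the column index type) of a complex matrix:
the square roots of the eigenvalues of the Hermitian matrix `Aᴴ * A`. -/
noncomputable def singularValues {m n : Type*} [Fintype m] [Fintype n] [DecidableEq n]
    (A : Matrix m n ℂ) : n → ℝ :=
  fun i => Real.sqrt ((Matrix.isHermitian_conjTranspose_mul_self A).eigenvalues i)

/-!
Let `Â`, `B̂` be the orthonormal polar factors of `U_f`, `U_l`, so that `P = ÂÂᴴ = U_f U_f†` and
`Q = B̂B̂ᴴ = U_l U_l†` are the orthogonal projections onto their column spaces. Since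
`P U_f = U_f`, the residual is `E = (P - Q) U_f`, and `‖U_f‖ ≤ 1` because `U_f` is made of rows
of the isometry `U`; this gives `‖E‖₂ ≤ ‖P - Q‖₂`.

For the gap, `P - Q = P(1 - Q) - (1 - P)Q`, where the two terms have orthogonal ranges and act
on the complementary subspaces `ran (1 - Q)` and `ran Q`, so `‖P - Q‖₂` is at most the larger of
their norms; conversely `P(1 - Q) = P(P - Q)`. With `C = ÂᴴB̂`, the C*-identity gives
`‖(1 - P)Q‖₂² = ‖1 - CᴴC‖₂` and `‖P(1 - Q)‖₂² = ‖1 - CCᴴ‖₂`, and since `CᴴC` and `CCᴴ` have the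
same spectrum, both equal `1 - σ_min(C)²`.
-/

namespace ContinuousLinearMap

variable {𝕜 E : Type*} [RCLike 𝕜] [NormedAddCommGroup E] [InnerProductSpace 𝕜 E] [CompleteSpace E]

lemma inner_apply_one_sub_apply_eq_zero {p : E →L[𝕜] E} (hp : IsStarProjection p) (x y : E) :
    inner 𝕜 (p x) ((1 - p) y) = 0 := by
  rw [← adjoint_inner_right, ← star_eq_adjoint, hp.isSelfAdjoint.star_eq, ← mul_apply_eq_comp,
    hp.mul_one_sub_self, zero_apply, inner_zero_right]

theorem norm_sub_le_max_of_isStarProjection {p q : E →L[𝕜] E} (hp : IsStarProjection p)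
    (hq : IsStarProjection q) : ‖p - q‖ ≤ max ‖p * (1 - q)‖ ‖(1 - p) * q‖ := by
  set a := ‖p * (1 - q)‖
  set b := ‖(1 - p) * q‖
  refine opNorm_le_bound _ (le_max_of_le_left (norm_nonneg _)) fun x => ?_
  have hsplit : (p - q) x = p ((1 - q) x) - (1 - p) (q x) := by
    simp only [sub_apply, map_sub]
    abel
  have hpyth : ‖(p - q) x‖ ^ 2 = ‖p ((1 - q) x)‖ ^ 2 + ‖(1 - p) (q x)‖ ^ 2 := by
    rw [hsplit, @norm_sub_sq 𝕜, inner_apply_one_sub_apply_eq_zero hp]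
    simp
  have hx : ‖x‖ * ‖x‖ = ‖q x‖ * ‖q x‖ + ‖(1 - q) x‖ * ‖(1 - q) x‖ := by
    conv_lhs => rw [← add_sub_cancel (q x) x]
    exact norm_add_sq_eq_norm_sq_add_norm_sq_of_inner_eq_zero _ _
      (inner_apply_one_sub_apply_eq_zero hq x x)
  have hu : ‖p ((1 - q) x)‖ ≤ max a b * ‖(1 - q) x‖ := by
    have hqx : (1 - q) ((1 - q) x) = (1 - q) x := by
      rw [← mul_apply_eq_comp, hq.one_sub.isIdempotentElem.eq]
    calc ‖p ((1 - q) x)‖ = ‖(p * (1 - q)) ((1 - q) x)‖ := by rw [mul_apply_eq_comp, hqx]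
      _ ≤ a * ‖(1 - q) x‖ := le_opNorm _ _
      _ ≤ max a b * ‖(1 - q) x‖ := by gcongr; exact le_max_left a b
  have hv : ‖(1 - p) (q x)‖ ≤ max a b * ‖q x‖ := by
    have hqx : q (q x) = q x := by rw [← mul_apply_eq_comp, hq.isIdempotentElem.eq]
    calc ‖(1 - p) (q x)‖ = ‖((1 - p) * q) (q x)‖ := by rw [mul_apply_eq_comp, hqx]
      _ ≤ b * ‖q x‖ := le_opNorm _ _
      _ ≤ max a b * ‖q x‖ := by gcongr; exact le_max_right a b
  have hsq : ‖(p - q) x‖ ^ 2 ≤ (max a b * ‖x‖) ^ 2 := by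
    rw [hpyth, mul_pow, sq ‖x‖, hx]
    nlinarith [mul_self_le_mul_self (norm_nonneg _) hu, mul_self_le_mul_self (norm_nonneg _) hv]
  exact le_of_pow_le_pow_left₀ two_ne_zero (by positivity) hsq

end ContinuousLinearMap

lemma pi_norm_one_sub_eq_one_sub_iInf {ι : Type*} [Fintype ι] [Nonempty ι] {f : ι → ℝ}
    (hf : ∀ i, f i ≤ 1) : ‖1 - f‖ = 1 - ⨅ i, f i := by
  obtain ⟨j, hj⟩ := Finite.exists_min f
  have hinf : ⨅ i, f i = f j := le_antisymm (ciInf_le (Finite.bddBelow_range _) j) (le_ciInf hj)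
  have hnorm (i : ι) : ‖(1 - f) i‖ = 1 - f i := by
    rw [Pi.sub_apply, Pi.one_apply, Real.norm_of_nonneg (by linarith [hf i])]
  rw [hinf]
  refine le_antisymm ((pi_norm_le_iff_of_nonneg (by linarith [hf j])).mpr fun i => ?_) ?_
  · rw [hnorm]
    linarith [hj i]
  · exact hnorm j ▸ norm_le_pi_norm _ j

namespace Matrix

lemma conjTranspose_mul_one_sub_mul {𝕜 l m n : Type*} [RCLike 𝕜] [Fintype l] [Fintype m]
    [DecidableEq m] [DecidableEq n] {A : Matrix m l 𝕜} {B : Matrix m n 𝕜} (hB : Bᴴ * B = 1) :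
    Bᴴ * (1 - A * Aᴴ) * B = 1 - (Aᴴ * B)ᴴ * (Aᴴ * B) := by
  rw [conjTranspose_mul, conjTranspose_conjTranspose, Matrix.mul_sub, Matrix.sub_mul,
    Matrix.mul_one, hB]
  simp only [Matrix.mul_assoc]

variable {𝕜 : Type*} [RCLike 𝕜] {l m n : Type*} [Fintype l] [Fintype m] [Fintype n] [DecidableEq n]

lemma isUnit_of_rank_eq_card {K : Type*} [Field K] {A : Matrix n n K}
    (h : A.rank = Fintype.card n) : IsUnit A := by
  rw [← mulVec_surjective_iff_isUnit]
  refine (LinearMap.range_eq_top (f := A.mulVecLin)).mp (Submodule.eq_top_of_finrank_eq ?_)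
  rw [← rank, h, Module.finrank_fintype_fun_eq_card]

lemma PosSemidef.sqrt_mul_self {A : Matrix n n 𝕜} (hA : A.PosSemidef) :
    hA.sqrt * hA.sqrt = A := by
  have hD : diagonal ((RCLike.ofReal ∘ (√·) ∘ hA.1.eigenvalues) : n → 𝕜) *
      diagonal (RCLike.ofReal ∘ (√·) ∘ hA.1.eigenvalues) =
      diagonal (RCLike.ofReal ∘ hA.1.eigenvalues) := by
    rw [diagonal_mul_diagonal]
    congr 1
    funext i
    simp only [Function.comp_apply]
    rw [← RCLike.ofReal_mul, Real.mul_self_sqrt (hA.eigenvalues_nonneg i)]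
  conv_rhs => rw [hA.1.spectral_theorem, Unitary.conjStarAlgAut_apply, ← hD]
  simp only [sqrt, Matrix.mul_assoc]
  rw [← Matrix.mul_assoc (star hA.1.eigenvectorUnitary : Matrix n n 𝕜),
    Unitary.coe_star_mul_self, Matrix.one_mul]

lemma PosSemidef.conjTranspose_sqrt {A : Matrix n n 𝕜} (hA : A.PosSemidef) :
    hA.sqrtᴴ = hA.sqrt := by
  simp [sqrt, Matrix.mul_assoc, star_eq_conjTranspose, Pi.star_def, Function.comp_def]

noncomputable def polarFactor (M : Matrix m n 𝕜) : Matrix m n 𝕜 :=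
  M * (posSemidef_conjTranspose_mul_self M).sqrt⁻¹

lemma isUnit_det_sqrt_conjTranspose_mul_self {M : Matrix m n 𝕜} (hM : IsUnit (Mᴴ * M)) :
    IsUnit (posSemidef_conjTranspose_mul_self M).sqrt.det := by
  refine isUnit_of_mul_isUnit_left (y := (posSemidef_conjTranspose_mul_self M).sqrt.det) ?_
  rwa [← det_mul, PosSemidef.sqrt_mul_self, ← isUnit_iff_isUnit_det]

lemma polarFactor_conjTranspose_mul_self {M : Matrix m n 𝕜} (hM : IsUnit (Mᴴ * M)) :
    (polarFactor M)ᴴ * polarFactor M = 1 := by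
  have hS := isUnit_det_sqrt_conjTranspose_mul_self hM
  have hSS := PosSemidef.sqrt_mul_self (posSemidef_conjTranspose_mul_self M)
  have hSH := PosSemidef.conjTranspose_sqrt (posSemidef_conjTranspose_mul_self M)
  unfold polarFactor
  generalize (posSemidef_conjTranspose_mul_self M).sqrt = S at hS hSS hSH ⊢
  calc (M * S⁻¹)ᴴ * (M * S⁻¹) = S⁻¹ * (S * S) * S⁻¹ := by
        rw [conjTranspose_mul, conjTranspose_nonsing_inv, hSH, hSS]
        simp only [Matrix.mul_assoc]
    _ = 1 := by
        rw [Matrix.mul_assoc, Matrix.mul_assoc, mul_nonsing_inv S hS, Matrix.mul_one,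
          nonsing_inv_mul S hS]

lemma polarFactor_mul_conjTranspose_self (M : Matrix m n 𝕜) :
    polarFactor M * (polarFactor M)ᴴ = M * ((Mᴴ * M)⁻¹ * Mᴴ) := by
  have hSS := PosSemidef.sqrt_mul_self (posSemidef_conjTranspose_mul_self M)
  have hSH := PosSemidef.conjTranspose_sqrt (posSemidef_conjTranspose_mul_self M)
  unfold polarFactor
  generalize (posSemidef_conjTranspose_mul_self M).sqrt = S at hSS hSH ⊢
  rw [conjTranspose_mul, conjTranspose_nonsing_inv, hSH, ← hSS, Matrix.mul_inv_rev]
  simp only [Matrix.mul_assoc]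

lemma l2_opNorm_le_one_of_conjTranspose_mul_self_eq_one {A : Matrix m n 𝕜} (hA : Aᴴ * A = 1) :
    ‖A‖ ≤ 1 := by
  have h : ‖A‖ * ‖A‖ ≤ 1 := by
    rw [← l2_opNorm_conjTranspose_mul_self, hA]
    exact IsStarProjection.norm_le _ (IsStarProjection.one _)
  nlinarith [norm_nonneg A]

lemma l2_opNorm_mul_mul_le [DecidableEq l] [DecidableEq m] (X : Matrix l m 𝕜)
    (M : Matrix m n 𝕜) (Y : Matrix n l 𝕜) : ‖X * M * Y‖ ≤ ‖X‖ * ‖M‖ * ‖Y‖ :=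
  (l2_opNorm_mul _ _).trans (by gcongr; exact l2_opNorm_mul _ _)

lemma l2_opNorm_mul_mul_conjTranspose [DecidableEq m] {A : Matrix m n 𝕜} (hA : Aᴴ * A = 1)
    (M : Matrix n n 𝕜) : ‖A * M * Aᴴ‖ = ‖M‖ := by
  have hA₁ := l2_opNorm_le_one_of_conjTranspose_mul_self_eq_one hA
  have hAt₁ : ‖Aᴴ‖ ≤ 1 := by rwa [l2_opNorm_conjTranspose]
  refine le_antisymm ?_ ?_
  · calc ‖A * M * Aᴴ‖ ≤ ‖A‖ * ‖M‖ * ‖Aᴴ‖ := l2_opNorm_mul_mul_le _ _ _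
      _ ≤ 1 * ‖M‖ * 1 := by gcongr
      _ = ‖M‖ := by ring
  · calc ‖M‖ = ‖Aᴴ * (A * M * Aᴴ) * A‖ := by
          rw [← Matrix.mul_assoc, ← Matrix.mul_assoc, hA, Matrix.one_mul, Matrix.mul_assoc, hA,
            Matrix.mul_one]
      _ ≤ ‖Aᴴ‖ * ‖A * M * Aᴴ‖ * ‖A‖ := l2_opNorm_mul_mul_le _ _ _
      _ ≤ 1 * ‖A * M * Aᴴ‖ * 1 := by gcongr
      _ = ‖A * M * Aᴴ‖ := by ring

lemma l2_opNorm_submatrix_le [DecidableEq l] [DecidableEq m] (A : Matrix m n 𝕜) {e : l → m}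
    (he : Function.Injective e) : ‖A.submatrix e id‖ ≤ ‖A‖ := by
  set S : Matrix l m 𝕜 := (1 : Matrix m m 𝕜).submatrix e id
  have hS : Sᴴᴴ * Sᴴ = 1 := by
    rw [conjTranspose_conjTranspose, conjTranspose_submatrix, conjTranspose_one,
      ← submatrix_mul _ _ _ _ _ Function.bijective_id, Matrix.one_mul, submatrix_one _ he]
  have hSA : S * A = A.submatrix e id := by
    simpa using (submatrix_mul (1 : Matrix m m 𝕜) A e id id Function.bijective_id).symm
  have hS₁ : ‖S‖ ≤ 1 := by
    rw [← l2_opNorm_conjTranspose]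
    exact l2_opNorm_le_one_of_conjTranspose_mul_self_eq_one hS
  rw [← hSA]
  exact (l2_opNorm_mul S A).trans (mul_le_of_le_one_left (norm_nonneg _) hS₁)

lemma l2_opNorm_conjStarAlgAut_diagonal (V : unitary (Matrix n n 𝕜)) (f : n → ℝ) :
    ‖Unitary.conjStarAlgAut 𝕜 _ V (diagonal (RCLike.ofReal ∘ f))‖ = ‖f‖ := by
  rw [Unitary.conjStarAlgAut_apply, ← Unitary.coe_star, CStarRing.norm_mul_coe_unitary,
    CStarRing.norm_coe_unitary_mul, l2_opNorm_diagonal]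
  simp [Pi.norm_def]

lemma IsHermitian.l2_opNorm_eq_norm_eigenvalues {H : Matrix n n 𝕜} (hH : H.IsHermitian) :
    ‖H‖ = ‖hH.eigenvalues‖ := by
  conv_lhs => rw [hH.spectral_theorem]
  exact l2_opNorm_conjStarAlgAut_diagonal _ _

lemma IsHermitian.one_sub_eq_conjStarAlgAut {H : Matrix n n 𝕜} (hH : H.IsHermitian) :
    1 - H = Unitary.conjStarAlgAut 𝕜 _ hH.eigenvectorUnitary
      (diagonal (RCLike.ofReal ∘ (1 - hH.eigenvalues))) := by
  conv_lhs => rw [hH.spectral_theorem]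
  rw [← map_one (Unitary.conjStarAlgAut 𝕜 _ hH.eigenvectorUnitary), ← map_sub]
  congr 1
  ext i j
  by_cases hij : i = j <;> simp [hij]

lemma IsHermitian.l2_opNorm_one_sub [Nonempty n] {H : Matrix n n 𝕜} (hH : H.IsHermitian)
    (h : ‖H‖ ≤ 1) : ‖1 - H‖ = 1 - ⨅ i, hH.eigenvalues i := by
  have hev (i : n) : hH.eigenvalues i ≤ 1 :=
    (Real.le_norm_self _).trans ((norm_le_pi_norm _ i).trans (hH.l2_opNorm_eq_norm_eigenvalues ▸ h))
  rw [hH.one_sub_eq_conjStarAlgAut, l2_opNorm_conjStarAlgAut_diagonal,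
    pi_norm_one_sub_eq_one_sub_iInf hev]

lemma iInf_eigenvalues_conjTranspose_mul_self_eq (C : Matrix n n 𝕜) :
    ⨅ i, (isHermitian_conjTranspose_mul_self C).eigenvalues i =
      ⨅ i, (isHermitian_mul_conjTranspose_self C).eigenvalues i := by
  have hsp : spectrum ℝ (Cᴴ * C) = spectrum ℝ (C * Cᴴ) := by
    ext r
    rcases eq_or_ne r 0 with rfl | hr
    · simp only [spectrum.zero_mem_iff, isUnit_iff_isUnit_det, det_mul, mul_comm]
    · exact spectrum.unit_mem_mul_comm (r := Units.mk0 r hr)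
  rw [← sInf_range, ← sInf_range,
    ← (isHermitian_conjTranspose_mul_self C).spectrum_real_eq_range_eigenvalues,
    ← (isHermitian_mul_conjTranspose_self C).spectrum_real_eq_range_eigenvalues, hsp]

lemma sq_iInf_singularValues [Nonempty n] (C : Matrix m n ℂ) :
    (⨅ i, singularValues C i) ^ 2 = ⨅ i, (isHermitian_conjTranspose_mul_self C).eigenvalues i := by
  have hev := (posSemidef_conjTranspose_mul_self C).eigenvalues_nonneg
  simp only [singularValues]
  rw [← Monotone.map_ciInf_of_continuousAt Real.continuous_sqrt.continuousAt
    (fun _ _ => Real.sqrt_le_sqrt) (Finite.bddBelow_range _), Real.sq_sqrt (le_ciInf hev)]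

lemma isStarProjection_mul_conjTranspose_self {A : Matrix m n 𝕜} (hA : Aᴴ * A = 1) :
    IsStarProjection (A * Aᴴ) where
  isIdempotentElem := by
    rw [IsIdempotentElem, Matrix.mul_assoc, ← Matrix.mul_assoc Aᴴ, hA, Matrix.one_mul]
  isSelfAdjoint := by
    rw [IsSelfAdjoint, star_eq_conjTranspose, conjTranspose_mul, conjTranspose_conjTranspose]

lemma l2_opNorm_sub_le_max_of_isStarProjection {P Q : Matrix n n 𝕜} (hP : IsStarProjection P)
    (hQ : IsStarProjection Q) : ‖P - Q‖ ≤ max ‖P * (1 - Q)‖ ‖(1 - P) * Q‖ := by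
  simpa only [cstar_norm_def, map_sub, map_mul, map_one] using
    ContinuousLinearMap.norm_sub_le_max_of_isStarProjection (hP.map toEuclideanCLM)
      (hQ.map toEuclideanCLM)

lemma sq_l2_opNorm_mul_mul_conjTranspose [DecidableEq m] {R : Matrix m m 𝕜}
    (hR : IsStarProjection R) {B : Matrix m n 𝕜} (hB : Bᴴ * B = 1) :
    ‖R * (B * Bᴴ)‖ ^ 2 = ‖Bᴴ * R * B‖ := by
  have h : (R * (B * Bᴴ))ᴴ * (R * (B * Bᴴ)) = B * (Bᴴ * R * B) * Bᴴ := by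
    rw [conjTranspose_mul, conjTranspose_mul, conjTranspose_conjTranspose,
      ← star_eq_conjTranspose R, hR.isSelfAdjoint.star_eq]
    simp only [Matrix.mul_assoc]
    rw [← Matrix.mul_assoc R R, hR.isIdempotentElem.eq]
  rw [sq, ← l2_opNorm_conjTranspose_mul_self, h, l2_opNorm_mul_mul_conjTranspose hB]

lemma l2_opNorm_conjTranspose_mul_le_one [DecidableEq l] [DecidableEq m] {A : Matrix m n 𝕜}
    {B : Matrix m l 𝕜} (hA : Aᴴ * A = 1) (hB : Bᴴ * B = 1) : ‖Aᴴ * B‖ ≤ 1 :=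
  (l2_opNorm_mul Aᴴ B).trans (mul_le_one₀
    ((l2_opNorm_conjTranspose A).trans_le (l2_opNorm_le_one_of_conjTranspose_mul_self_eq_one hA))
    (norm_nonneg B) (l2_opNorm_le_one_of_conjTranspose_mul_self_eq_one hB))

theorem l2_opNorm_mul_conjTranspose_sub_mul_conjTranspose [DecidableEq m] [Nonempty n]
    {A B : Matrix m n ℂ} (hA : Aᴴ * A = 1) (hB : Bᴴ * B = 1) :
    ‖A * Aᴴ - B * Bᴴ‖ = √(1 - (⨅ i, singularValues (Aᴴ * B) i) ^ 2) := by
  set C := Aᴴ * B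
  have hP := isStarProjection_mul_conjTranspose_self hA
  have hQ := isStarProjection_mul_conjTranspose_self hB
  have hC : ‖C‖ * ‖C‖ ≤ 1 :=
    mul_le_one₀ (l2_opNorm_conjTranspose_mul_le_one hA hB) (norm_nonneg C)
      (l2_opNorm_conjTranspose_mul_le_one hA hB)
  have hb : ‖(1 - A * Aᴴ) * (B * Bᴴ)‖ =
      √(1 - ⨅ i, (isHermitian_conjTranspose_mul_self C).eigenvalues i) := by
    rw [← IsHermitian.l2_opNorm_one_sub _ (by rwa [l2_opNorm_conjTranspose_mul_self]),
      ← conjTranspose_mul_one_sub_mul hB, ← sq_l2_opNorm_mul_mul_conjTranspose hP.one_sub hB,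
      Real.sqrt_sq (norm_nonneg _)]
  have ha : ‖A * Aᴴ * (1 - B * Bᴴ)‖ =
      √(1 - ⨅ i, (isHermitian_mul_conjTranspose_self C).eigenvalues i) := by
    have hCC : C * Cᴴ = (Bᴴ * A)ᴴ * (Bᴴ * A) := by
      rw [conjTranspose_mul, conjTranspose_conjTranspose, conjTranspose_mul,
        conjTranspose_conjTranspose]
    have hCt : ‖Bᴴ * A‖ = ‖C‖ := by
      rw [← l2_opNorm_conjTranspose, conjTranspose_mul, conjTranspose_conjTranspose]
    have hCC₁ : ‖C * Cᴴ‖ ≤ 1 := by rwa [hCC, l2_opNorm_conjTranspose_mul_self, hCt]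
    rw [← IsHermitian.l2_opNorm_one_sub _ hCC₁, hCC, ← conjTranspose_mul_one_sub_mul hA,
      ← sq_l2_opNorm_mul_mul_conjTranspose hQ.one_sub hA, Real.sqrt_sq (norm_nonneg _),
      ← l2_opNorm_conjTranspose, conjTranspose_mul, ← star_eq_conjTranspose,
      ← star_eq_conjTranspose, hP.isSelfAdjoint.star_eq, hQ.one_sub.isSelfAdjoint.star_eq]
  rw [iInf_eigenvalues_conjTranspose_mul_self_eq] at hb
  rw [sq_iInf_singularValues, iInf_eigenvalues_conjTranspose_mul_self_eq, ← ha]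
  refine le_antisymm ?_ ?_
  · calc ‖A * Aᴴ - B * Bᴴ‖ ≤ max ‖A * Aᴴ * (1 - B * Bᴴ)‖ ‖(1 - A * Aᴴ) * (B * Bᴴ)‖ :=
          l2_opNorm_sub_le_max_of_isStarProjection hP hQ
      _ = ‖A * Aᴴ * (1 - B * Bᴴ)‖ := by rw [ha, hb, max_self]
  · calc ‖A * Aᴴ * (1 - B * Bᴴ)‖ = ‖A * Aᴴ * (A * Aᴴ - B * Bᴴ)‖ := by
          rw [mul_sub, mul_sub, hP.isIdempotentElem.eq, mul_one]
      _ ≤ ‖A * Aᴴ‖ * ‖A * Aᴴ - B * Bᴴ‖ := l2_opNorm_mul _ _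
      _ ≤ ‖A * Aᴴ - B * Bᴴ‖ := mul_le_of_le_one_left (norm_nonneg _) (hP.norm_le _)

lemma l2_opNorm_residual_le_l2_opNorm_proj_sub [DecidableEq m] [DecidableEq l] {X : Matrix m n 𝕜}
    (Y : Matrix m l 𝕜) (hX : IsUnit (Xᴴ * X)) (hX₁ : ‖X‖ ≤ 1) :
    ‖X - Y * ((Yᴴ * Y)⁻¹ * Yᴴ * X)‖ ≤ ‖X * ((Xᴴ * X)⁻¹ * Xᴴ) - Y * ((Yᴴ * Y)⁻¹ * Yᴴ)‖ := by
  have hE : X - Y * ((Yᴴ * Y)⁻¹ * Yᴴ * X) =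
      (X * ((Xᴴ * X)⁻¹ * Xᴴ) - Y * ((Yᴴ * Y)⁻¹ * Yᴴ)) * X := by
    rw [Matrix.sub_mul, Matrix.mul_assoc X, Matrix.mul_assoc _ Xᴴ X,
      nonsing_inv_mul _ ((isUnit_iff_isUnit_det _).mp hX), Matrix.mul_one]
    simp only [Matrix.mul_assoc]
  rw [hE]
  exact (l2_opNorm_mul _ _).trans (mul_le_of_le_one_right (norm_nonneg _) hX₁)

end Matrix

theorem ester_norm_le_gap_general (m s : ℕ) (hs : 0 < s)
    (U : Matrix (Fin (m + 1)) (Fin s) ℂ) (hU : Uᴴ * U = 1)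
    (Uf Ul : Matrix (Fin m) (Fin s) ℂ)
    (hUf : Uf = U.submatrix Fin.succ id)
    (hrf : Uf.rank = s) (hrl : Ul.rank = s) :
    specNorm (Uf - Ul * ((Ulᴴ * Ul)⁻¹ * Ulᴴ * Uf)) ≤
        specNorm (Uf * ((Ufᴴ * Uf)⁻¹ * Ufᴴ) - Ul * ((Ulᴴ * Ul)⁻¹ * Ulᴴ)) ∧
      specNorm (Uf * ((Ufᴴ * Uf)⁻¹ * Ufᴴ) - Ul * ((Ulᴴ * Ul)⁻¹ * Ulᴴ)) =
        Real.sqrt (1 - (⨅ i, singularValues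
          ((Uf * ((Matrix.posSemidef_conjTranspose_mul_self Uf).sqrt)⁻¹)ᴴ *
            (Ul * ((Matrix.posSemidef_conjTranspose_mul_self Ul).sqrt)⁻¹)) i) ^ 2) := by
  have : Nonempty (Fin s) := Fin.pos_iff_nonempty.mp hs
  have hf : IsUnit (Ufᴴ * Uf) := Matrix.isUnit_of_rank_eq_card
    (by rw [Matrix.rank_conjTranspose_mul_self, hrf, Fintype.card_fin])
  have hl : IsUnit (Ulᴴ * Ul) := Matrix.isUnit_of_rank_eq_card
    (by rw [Matrix.rank_conjTranspose_mul_self, hrl, Fintype.card_fin])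
  have hUf₁ : ‖Uf‖ ≤ 1 := hUf ▸ (U.l2_opNorm_submatrix_le (Fin.succ_injective m)).trans
    (Matrix.l2_opNorm_le_one_of_conjTranspose_mul_self_eq_one hU)
  refine ⟨Matrix.l2_opNorm_residual_le_l2_opNorm_proj_sub Ul hf hUf₁, ?_⟩
  rw [specNorm, ← Matrix.polarFactor_mul_conjTranspose_self,
    ← Matrix.polarFactor_mul_conjTranspose_self]
  exact Matrix.l2_opNorm_mul_conjTranspose_sub_mul_conjTranspose
    (Matrix.polarFactor_conjTranspose_mul_self hf) (Matrix.polarFactor_conjTranspose_mul_self hl)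

/-- Let `U` be an `(m+1) × s` complex matrix with orthonormal columns
(`s ≤ m`), let `Uf` (resp. `Ul`) be obtained from `U` by deleting its first (resp. last)
row, both of full column rank `s`.  With `E = Uf − Ul Ul† Uf` (for a full-column-rank
matrix `A` the Moore–Penrose pseudo-inverse is `A† = (AᴴA)⁻¹Aᴴ`), `P_f = Uf Uf†`,
`P_l = Ul Ul†` the orthogonal projections onto the column spaces, we have
`‖E‖₂ ≤ ‖P_f − P_l‖₂` and `‖P_f − P_l‖₂ = sin θ₁ = √(1 − σ_min(ÂᴴB̂)²)`, where
`Â = Uf (UfᴴUf)^{-1/2}` and `B̂ = Ul (UlᴴUl)^{-1/2}` are the orthonormal polar factors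
and `θ₁` is the largest principal angle between the column spaces of `Uf` and `Ul`. -/
theorem ester_norm_le_gap (m s : ℕ) (hs : 0 < s) (hsm : s ≤ m)
    (U : Matrix (Fin (m + 1)) (Fin s) ℂ) (hU : Uᴴ * U = 1)
    (Uf Ul : Matrix (Fin m) (Fin s) ℂ)
    (hUf : Uf = U.submatrix Fin.succ id) (hUl : Ul = U.submatrix Fin.castSucc id)
    (hrf : Uf.rank = s) (hrl : Ul.rank = s) :
    specNorm (Uf - Ul * ((Ulᴴ * Ul)⁻¹ * Ulᴴ * Uf)) ≤
        specNorm (Uf * ((Ufᴴ * Uf)⁻¹ * Ufᴴ) - Ul * ((Ulᴴ * Ul)⁻¹ * Ulᴴ)) ∧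
      specNorm (Uf * ((Ufᴴ * Uf)⁻¹ * Ufᴴ) - Ul * ((Ulᴴ * Ul)⁻¹ * Ulᴴ)) =
        Real.sqrt (1 - (⨅ i, singularValues
          ((Uf * ((Matrix.posSemidef_conjTranspose_mul_self Uf).sqrt)⁻¹)ᴴ *
            (Ul * ((Matrix.posSemidef_conjTranspose_mul_self Ul).sqrt)⁻¹)) i) ^ 2) :=
  ester_norm_le_gap_general m s hs U hU Uf Ul hUf hrf hrl
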